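/- arXiv:1312.6234 — 2 statements merged into one kernel-verified Lean document; each statement's English description precedes it below -/
import Mathlib

section
/- Let d ≥ 3. There exists a constant C > 0 (depending only on d) such that for every continuously differentiable function e : ℝ^d → ℝ with e ∈ L^∞(ℝ^d) and ∇e ∈ L^d(ℝ^d; ℝ^d), and every smooth compactly supported φ : ℝ^d → ℝ, one has ‖∇(e·φ)‖_{L^2(ℝ^d)} ≤ (‖e‖_{L^∞} + C‖∇e‖_{L^d}) ‖∇φ‖_{L^2(ℝ^d)}. -/
open MeasureTheory ENNReal
open scoped NNReal

/-- The key estimate in the proof of Lemma 4.1: for `d ≥ 3` there is `C > 0` such that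
for every `C¹` function `e` with `e ∈ L^∞` and `∇e ∈ L^d`, and every smooth compactly
supported `φ`, one has `‖∇(e·φ)‖_{L²} ≤ (‖e‖_∞ + C‖∇e‖_d) ‖∇φ‖_{L²}`. -/
theorem gradient_product_estimate
    (d : ℕ) (hd : 3 ≤ d) :
    ∃ C : ℝ, 0 < C ∧
      ∀ e : EuclideanSpace ℝ (Fin d) → ℝ,
        ContDiff ℝ 1 e →
        eLpNorm e ∞ volume < ∞ →
        eLpNorm (fun x => ‖fderiv ℝ e x‖) (d : ℝ≥0∞) volume < ∞ →
        ∀ φ : EuclideanSpace ℝ (Fin d) → ℝ,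
          ContDiff ℝ (⊤ : ℕ∞) φ → HasCompactSupport φ →
          eLpNorm (fun x => ‖fderiv ℝ (fun y => e y * φ y) x‖) 2 volume ≤
            (eLpNorm e ∞ volume +
                ENNReal.ofReal C * eLpNorm (fun x => ‖fderiv ℝ e x‖) (d : ℝ≥0∞) volume) *
              eLpNorm (fun x => ‖fderiv ℝ φ x‖) 2 volume := by
  classical
  set μ : Measure (EuclideanSpace ℝ (Fin d)) := volume
  set C0 : ℝ≥0 := eLpNormLESNormFDerivOfEqInnerConst μ 2 with hC0
  refine ⟨max C0 1, lt_of_lt_of_le one_pos (le_max_right _ _), ?_⟩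
  intro e he heL hgeL φ hφ hφc
  have hd2 : (2 : ℝ≥0) < (d : ℝ≥0) := by exact_mod_cast lt_of_lt_of_le (by norm_num) hd
  have hd0 : (d : ℝ≥0) ≠ 0 := by positivity
  -- the Sobolev conjugate exponent
  set p' : ℝ≥0 := ((2 : ℝ≥0)⁻¹ - (d : ℝ≥0)⁻¹)⁻¹ with hp'def
  have hsub_pos : (0 : ℝ≥0) < (2 : ℝ≥0)⁻¹ - (d : ℝ≥0)⁻¹ := by
    rw [tsub_pos_iff_lt]
    exact inv_strictAnti₀ (by norm_num) hd2
  have hp'0 : p' ≠ 0 := by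
    rw [hp'def]
    simp [hsub_pos.ne']
  have hp'inv : p'⁻¹ = (2 : ℝ≥0)⁻¹ - (d : ℝ≥0)⁻¹ := by rw [hp'def, inv_inv]
  -- continuity facts
  have ce : Continuous e := he.continuous
  have cfe : Continuous (fderiv ℝ e) := he.continuous_fderiv one_ne_zero
  have cφ : Continuous φ := hφ.continuous
  have cfφ : Continuous (fderiv ℝ φ) := hφ.continuous_fderiv (by simp)
  -- abbreviations
  set N := eLpNorm (fun x => ‖fderiv ℝ φ x‖) 2 μ with hN
  set D := eLpNorm (fun x => ‖fderiv ℝ e x‖) (d : ℝ≥0∞) μ with hD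
  -- Sobolev inequality
  have hn : 0 < Module.finrank ℝ (EuclideanSpace ℝ (Fin d)) := by
    rw [finrank_euclideanSpace_fin]; omega
  have hsob : eLpNorm φ p' μ ≤ (C0 : ℝ≥0∞) * N := by
    have := eLpNorm_le_eLpNorm_fderiv_of_eq_inner μ (hφ.of_le (by simp)) hφc
      (p := 2) (p' := p') one_le_two (by exact hn) ?_
    · rw [hN, eLpNorm_norm]
      exact this
    · rw [finrank_euclideanSpace_fin]
      rw [← NNReal.coe_inv, hp'inv, NNReal.coe_sub (le_of_lt (inv_strictAnti₀ (by norm_num) hd2))]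
      push_cast
      norm_num
  -- pointwise bound on the derivative of the product
  have hpt : ∀ x, ‖fderiv ℝ (fun y => e y * φ y) x‖ ≤
      ‖e x‖ * ‖fderiv ℝ φ x‖ + ‖φ x‖ * ‖fderiv ℝ e x‖ := by
    intro x
    rw [fderiv_fun_mul (he.differentiable one_ne_zero x) (hφ.differentiable (by simp) x)]
    refine (norm_add_le _ _).trans ?_
    rw [norm_smul, norm_smul]
  -- Hölder for the first term
  have h1 : eLpNorm (fun x => ‖e x‖ * ‖fderiv ℝ φ x‖) 2 μ ≤ eLpNorm e ∞ μ * N := by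
    refine (eLpNorm_le_eLpNorm_mul_eLpNorm'_of_norm (p := ∞) (q := 2) (r := 2)
      ce.aestronglyMeasurable (cfφ.norm.aestronglyMeasurable)
      (fun a c => ‖a‖ * c) 1 (Filter.Eventually.of_forall fun x => ?_)).trans (le_of_eq (by rw [ENNReal.coe_one, one_mul]))
    rw [Real.norm_eq_abs, abs_mul, abs_norm, abs_norm]
    simp
  -- Hölder for the second term
  have hpqr : (1 : ℝ≥0∞) / 2 = 1 / (d : ℝ≥0∞) + 1 / (p' : ℝ≥0∞) := by
    have : ((d : ℝ≥0∞)) = ((d : ℝ≥0) : ℝ≥0∞) := by simp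
    rw [this, one_div, one_div, one_div, ← ENNReal.coe_inv hd0, ← ENNReal.coe_inv hp'0,
      ← ENNReal.coe_add, show ((2 : ℝ≥0∞)) = ((2 : ℝ≥0) : ℝ≥0∞) from rfl,
      ← ENNReal.coe_inv (by norm_num), ENNReal.coe_inj, hp'inv,
      add_tsub_cancel_of_le (le_of_lt (inv_strictAnti₀ (by norm_num) hd2))]
  have h2 : eLpNorm (fun x => ‖φ x‖ * ‖fderiv ℝ e x‖) 2 μ ≤ D * eLpNorm φ p' μ := by
    refine (eLpNorm_le_eLpNorm_mul_eLpNorm'_of_norm (p := (d : ℝ≥0∞)) (q := p') (r := 2)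
      cfe.norm.aestronglyMeasurable cφ.aestronglyMeasurable
      (fun a c => ‖c‖ * a) 1 (Filter.Eventually.of_forall fun x => ?_)
      (hpqr := ⟨by simpa only [one_div] using hpqr.symm⟩)).trans (le_of_eq (by rw [ENNReal.coe_one, one_mul]))
    simp [abs_mul, abs_norm, Real.norm_eq_abs, mul_comm]
  -- combine
  calc eLpNorm (fun x => ‖fderiv ℝ (fun y => e y * φ y) x‖) 2 μ
      ≤ eLpNorm (fun x => ‖e x‖ * ‖fderiv ℝ φ x‖ + ‖φ x‖ * ‖fderiv ℝ e x‖) 2 μ := by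
        refine eLpNorm_mono fun x => ?_
        rw [norm_norm, Real.norm_eq_abs, abs_of_nonneg (by positivity)]
        exact hpt x
    _ ≤ eLpNorm (fun x => ‖e x‖ * ‖fderiv ℝ φ x‖) 2 μ +
        eLpNorm (fun x => ‖φ x‖ * ‖fderiv ℝ e x‖) 2 μ :=
        eLpNorm_add_le ((ce.norm.mul cfφ.norm).aestronglyMeasurable)
          ((cφ.norm.mul cfe.norm).aestronglyMeasurable) one_le_two
    _ ≤ eLpNorm e ∞ μ * N + D * ((C0 : ℝ≥0∞) * N) := by
        gcongr
        exact h2.trans (by gcongr)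
    _ = eLpNorm e ∞ μ * N + (C0 : ℝ≥0∞) * D * N := by ring
    _ ≤ eLpNorm e ∞ μ * N + ENNReal.ofReal (max C0 1) * D * N := by
        gcongr
        rw [← ENNReal.ofReal_coe_nnreal]
        exact ENNReal.ofReal_le_ofReal (le_max_left _ _)
    _ = (eLpNorm e ∞ μ + ENNReal.ofReal (max C0 1) * D) * N := (add_mul _ _ _).symm
end

section
/- Let g : ℝ^d × ℝ^d → [0, ∞) be measurable and symmetric (g(ξ, ξ̃) = g(ξ̃, ξ)), let ψ : ℝ → ℝ be monotonically nondecreasing with ψ(0) = 0, and let f : ℝ^d → ℝ be measurable. Assume the functions (ξ, ξ̃) ↦ ψ(f(ξ)) f(ξ̃) g(ξ, ξ̃), (ξ, ξ̃) ↦ ψ(f(ξ)) f(ξ) g(ξ, ξ̃) and ξ ↦ ψ(f(ξ)) f(ξ) are integrable, and that P1(ξ) := ∫ g(ξ, ξ̃) dξ̃ ≤ 1 for almost every ξ. Then ∫ ψ(f(ξ)) (Pf(ξ) − f(ξ)) dξ ≤ 0, where Pf(ξ) := ∫ f(ξ̃) g(ξ, ξ̃) dξ̃. -/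
/-!
Writing `A = ∬ ψ(f ξ) f(ξ̃) g` and `B = ∬ ψ(f ξ) f(ξ) g`, Fubini gives
`∫ ψ(f)(Pf − f) = A − ∫ ψ(f) f`. Since `g` is symmetric,
`2(B − A) = ∬ (ψ(f ξ) − ψ(f ξ̃))(f ξ − f ξ̃) g ≥ 0` because `ψ ∘ f` and `f` vary together,
and `B = ∫ ψ(f) f · P1 ≤ ∫ ψ(f) f` because `ψ(r) r ≥ 0` and `P1 ≤ 1`.
-/

open MeasureTheory

theorem Monotone.map_mul_self_nonneg {ψ : ℝ → ℝ} (hψ : Monotone ψ) (hψ0 : ψ 0 = 0) (r : ℝ) :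
    0 ≤ ψ r * r := by
  simpa [hψ0] using (monovary_id_iff.2 hψ).sub_mul_sub_nonneg r 0

section SymmetricKernel

variable {α : Type*} [MeasurableSpace α] {μ : Measure α} [SFinite μ] {g : α → α → ℝ}

theorem MeasureTheory.Integrable.prod_swap_mul_of_symm (hg_symm : ∀ x y, g x y = g y x)
    {F : α → α → ℝ}
    (hF : Integrable (fun p : α × α => F p.1 p.2 * g p.1 p.2) (μ.prod μ)) :
    Integrable (fun p : α × α => F p.2 p.1 * g p.1 p.2) (μ.prod μ) :=
  hF.swap.congr <| .of_forall fun p => by simp [hg_symm p.1 p.2]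

theorem integral_prod_swap_mul_of_symm (hg_symm : ∀ x y, g x y = g y x) (F : α → α → ℝ) :
    ∫ p : α × α, F p.2 p.1 * g p.1 p.2 ∂μ.prod μ =
      ∫ p : α × α, F p.1 p.2 * g p.1 p.2 ∂μ.prod μ := by
  rw [← integral_prod_swap]
  simp [hg_symm]

theorem integral_prod_mul_le_of_monovary {u v : α → ℝ} (huv : Monovary u v)
    (hg_nonneg : ∀ x y, 0 ≤ g x y) (hg_symm : ∀ x y, g x y = g y x)
    (h_cross : Integrable (fun p : α × α => u p.1 * v p.2 * g p.1 p.2) (μ.prod μ))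
    (h_diag : Integrable (fun p : α × α => u p.1 * v p.1 * g p.1 p.2) (μ.prod μ)) :
    ∫ p : α × α, u p.1 * v p.2 * g p.1 p.2 ∂μ.prod μ ≤
      ∫ p : α × α, u p.1 * v p.1 * g p.1 p.2 ∂μ.prod μ := by
  have h_cross_swap := h_cross.prod_swap_mul_of_symm (F := fun x y => u x * v y) hg_symm
  have h_diag_swap := h_diag.prod_swap_mul_of_symm (F := fun x y => u x * v x) hg_symm
  have h_sum_le : ∫ p : α × α, (u p.1 * v p.2 * g p.1 p.2 + u p.2 * v p.1 * g p.1 p.2) ∂μ.prod μ ≤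
      ∫ p : α × α, (u p.1 * v p.1 * g p.1 p.2 + u p.2 * v p.2 * g p.1 p.2) ∂μ.prod μ := by
    refine integral_mono (h_cross.add h_cross_swap) (h_diag.add h_diag_swap) fun p => ?_
    simp only [← add_mul]
    exact mul_le_mul_of_nonneg_right (huv.mul_add_mul_le_mul_add_mul p.1 p.2) (hg_nonneg p.1 p.2)
  rw [integral_add h_cross h_cross_swap, integral_add h_diag h_diag_swap,
    integral_prod_swap_mul_of_symm hg_symm (fun x y => u x * v y),
    integral_prod_swap_mul_of_symm hg_symm (fun x y => u x * v x)] at h_sum_le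
  linarith

theorem integral_prod_mul_le_of_integral_le_one {w : α → ℝ} (hw_nonneg : 0 ≤ᵐ[μ] w)
    (hw : Integrable w μ) (hwg : Integrable (fun p : α × α => w p.1 * g p.1 p.2) (μ.prod μ))
    (hP1 : ∀ᵐ x ∂μ, ∫ y, g x y ∂μ ≤ 1) :
    ∫ p : α × α, w p.1 * g p.1 p.2 ∂μ.prod μ ≤ ∫ x, w x ∂μ := by
  rw [integral_prod _ hwg]
  refine integral_mono_ae hwg.integral_prod_left hw ?_
  filter_upwards [hw_nonneg, hP1] with x hwx hx
  rw [integral_const_mul]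
  exact mul_le_of_le_one_right hwx hx

end SymmetricKernel

theorem dissipativity_inequality_general
    (d : ℕ)
    (g : EuclideanSpace ℝ (Fin d) → EuclideanSpace ℝ (Fin d) → ℝ)
    (hg_nonneg : ∀ ξ ξt, 0 ≤ g ξ ξt)
    (hg_symm : ∀ ξ ξt, g ξ ξt = g ξt ξ)
    (ψ : ℝ → ℝ) (hψ : Monotone ψ) (hψ0 : ψ 0 = 0)
    (f : EuclideanSpace ℝ (Fin d) → ℝ)
    (h1 : Integrable (fun p : EuclideanSpace ℝ (Fin d) × EuclideanSpace ℝ (Fin d) =>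
            ψ (f p.1) * f p.2 * g p.1 p.2) (volume.prod volume))
    (h2 : Integrable (fun p : EuclideanSpace ℝ (Fin d) × EuclideanSpace ℝ (Fin d) =>
            ψ (f p.1) * f p.1 * g p.1 p.2) (volume.prod volume))
    (h3 : Integrable (fun ξ => ψ (f ξ) * f ξ) volume)
    (hP1 : ∀ᵐ ξ ∂(volume : Measure (EuclideanSpace ℝ (Fin d))), (∫ ξt, g ξ ξt) ≤ 1) :
    ∫ ξ, ψ (f ξ) * ((∫ ξt, f ξt * g ξ ξt) - f ξ) ≤ 0 := by
  have h_fubini : ∫ ξ, ψ (f ξ) * ((∫ ξt, f ξt * g ξ ξt) - f ξ) =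
      (∫ p, ψ (f p.1) * f p.2 * g p.1 p.2 ∂volume.prod volume) - ∫ ξ, ψ (f ξ) * f ξ := by
    rw [integral_prod _ h1, ← integral_sub h1.integral_prod_left h3]
    congr 1 with ξ
    simp only [mul_sub, mul_assoc, integral_const_mul]
  have h_symm : ∫ p, ψ (f p.1) * f p.2 * g p.1 p.2 ∂volume.prod volume ≤
      ∫ p, ψ (f p.1) * f p.1 * g p.1 p.2 ∂volume.prod volume :=
    integral_prod_mul_le_of_monovary ((monovary_self f).comp_monotone_left hψ) hg_nonneg hg_symm
      h1 h2
  have h_P1 : ∫ p, ψ (f p.1) * f p.1 * g p.1 p.2 ∂volume.prod volume ≤ ∫ ξ, ψ (f ξ) * f ξ :=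
    integral_prod_mul_le_of_integral_le_one (.of_forall fun ξ => hψ.map_mul_self_nonneg hψ0 (f ξ))
      h3 h2 hP1
  linarith

/-- Dissipativity inequality `⟨ψ(f), (P − I)f⟩ ≤ 0` from the proof of Lemma 3.5 (Claim 1):
for a symmetric nonnegative kernel `g` with `P1 ≤ 1` a.e., a nondecreasing `ψ` with
`ψ 0 = 0`, and measurable `f`, under the stated integrability assumptions,
`∫ ψ(f ξ)(Pf(ξ) − f ξ) dξ ≤ 0`. -/
theorem dissipativity_inequality
    (d : ℕ)
    (g : EuclideanSpace ℝ (Fin d) → EuclideanSpace ℝ (Fin d) → ℝ)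
    (hg_meas : Measurable (Function.uncurry g))
    (hg_nonneg : ∀ ξ ξt, 0 ≤ g ξ ξt)
    (hg_symm : ∀ ξ ξt, g ξ ξt = g ξt ξ)
    (ψ : ℝ → ℝ) (hψ : Monotone ψ) (hψ0 : ψ 0 = 0)
    (f : EuclideanSpace ℝ (Fin d) → ℝ) (hf : Measurable f)
    (h1 : Integrable (fun p : EuclideanSpace ℝ (Fin d) × EuclideanSpace ℝ (Fin d) =>
            ψ (f p.1) * f p.2 * g p.1 p.2) (volume.prod volume))
    (h2 : Integrable (fun p : EuclideanSpace ℝ (Fin d) × EuclideanSpace ℝ (Fin d) =>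
            ψ (f p.1) * f p.1 * g p.1 p.2) (volume.prod volume))
    (h3 : Integrable (fun ξ => ψ (f ξ) * f ξ) volume)
    (hP1 : ∀ᵐ ξ ∂(volume : Measure (EuclideanSpace ℝ (Fin d))), (∫ ξt, g ξ ξt) ≤ 1) :
    ∫ ξ, ψ (f ξ) * ((∫ ξt, f ξt * g ξ ξt) - f ξ) ≤ 0 :=
  dissipativity_inequality_general d g hg_nonneg hg_symm ψ hψ hψ0 f h1 h2 h3 hP1
end
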